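/- Let A and B be closed subsets of a Euclidean space E and x̄ ∈ A ∩ B. The collection {A,B} is transversal at x̄ if and only if N_A(x̄) ∩ (−N_B(x̄)) = {0}, i.e., the only pair of vectors v₁ ∈ N_A(x̄), v₂ ∈ N_B(x̄) with v₁ + v₂ = 0 is v₁ = v₂ = 0. -/

import Mathlib

open Metric Set Pointwise Filter ENNReal
open scoped RealInnerProductSpace

section Defs

variable {E : Type*} [NormedAddCommGroup E] [InnerProductSpace ℝ E] [FiniteDimensional ℝ E]

/-- The projector onto a set: `P_A(x) = {a ∈ A : ‖x − a‖ = d(x,A)}`. -/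
def projSet (A : Set E) (x : E) : Set E := {a | a ∈ A ∧ ‖x - a‖ = Metric.infDist x A}

/-- The proximal normal cone `N^p_A(a) = {λ(x−a) : λ ≥ 0, a ∈ P_A(x)}`. -/
def proxNC (A : Set E) (a : E) : Set E :=
  {v | ∃ lam : ℝ, 0 ≤ lam ∧ ∃ x : E, a ∈ projSet A x ∧ v = lam • (x - a)}

/-- The restricted (`A'`-)proximal normal cone
`N^p_{A|A'}(a) = {λ(x−a) : λ ≥ 0, x ∈ A', a ∈ P_A(x)}`. -/
def proxNCRes (A A' : Set E) (a : E) : Set E :=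
  {v | ∃ lam : ℝ, 0 ≤ lam ∧ ∃ x ∈ A', a ∈ projSet A x ∧ v = lam • (x - a)}

/-- The limiting normal cone: limits of proximal normals at points of `A` converging to `a`. -/
def limNC (A : Set E) (a : E) : Set E :=
  {v | ∃ x w : ℕ → E, (∀ k, x k ∈ A) ∧ (∀ k, w k ∈ proxNC A (x k)) ∧
    Filter.Tendsto x Filter.atTop (nhds a) ∧ Filter.Tendsto w Filter.atTop (nhds v)}

/-- The Fréchet normal cone (via the standard ε-δ reformulation of `limsup ≤ 0`). -/
def frechetNC (A : Set E) (a : E) : Set E :=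
  {v | ∀ ε > 0, ∃ δ > 0, ∀ x ∈ A, ‖x - a‖ < δ → ⟪v, x - a⟫ ≤ ε * ‖x - a‖}

/-- `A` is elementally subregular of order `σ` relative to `B` for `(a,v)` with constant `ε`
and neighborhood `U` (of the reference point). -/
def ElemSubregOn (A B : Set E) (a v : E) (ε σ : ℝ) (U : Set E) : Prop :=
  ∀ b ∈ B ∩ U, ∀ bA ∈ projSet A b,
    ⟪v - (b - bA), bA - a⟫ ≤ ε * ‖v - (b - bA)‖ ^ (1 + σ) * ‖bA - a‖

/-- `A` is `σ`-Hölder regular relative to `B` (first argument is the projected set) at points of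
`B ∩ W` with constant `c` and neighborhood `W`:
`B_{(1+c)‖b−b_A‖}(b) ∩ A ∩ {x ∈ P_B⁻¹(b) : ⟨b−b_A, x−b_A⟩ > √c ‖b−b_A‖^{σ+1} ‖x−b_A‖} = ∅`. -/
def HoelderRegOn (A B : Set E) (σ c : ℝ) (W : Set E) : Prop :=
  ∀ b ∈ B ∩ W, ∀ bA ∈ projSet A b ∩ W,
    ∀ x ∈ Metric.ball b ((1 + c) * ‖b - bA‖) ∩ A, b ∈ projSet B x →
      ⟪b - bA, x - bA⟫ ≤ Real.sqrt c * ‖b - bA‖ ^ (σ + 1) * ‖x - bA‖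

/-- `A` is super-regular at `x̄`. -/
def SuperRegular (A : Set E) (xb : E) : Prop :=
  ∀ ε > 0, ∃ δ > 0, ∀ x ∈ A ∩ Metric.ball xb δ, ∀ z ∈ Metric.ball xb δ, ∀ zA ∈ projSet A z,
    ⟪z - zA, x - zA⟫ ≤ ε * ‖z - zA‖ * ‖x - zA‖

/-- Subtransversality with constants `α`, `δ`:
`(A + (αρ)𝔹) ∩ (B + (αρ)𝔹) ∩ B_δ(x̄) ⊆ (A ∩ B) + ρ𝔹` for all `ρ ∈ (0,δ)`. -/
def SubtransversalWith (A B : Set E) (xb : E) (α δ : ℝ) : Prop :=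
  ∀ ρ ∈ Set.Ioo (0 : ℝ) δ,
    (A + Metric.ball 0 (α * ρ)) ∩ (B + Metric.ball 0 (α * ρ)) ∩ Metric.ball xb δ ⊆
      (A ∩ B) + Metric.ball 0 ρ

/-- The collection `{A,B}` is subtransversal at `x̄`. -/
def Subtransversal (A B : Set E) (xb : E) : Prop :=
  ∃ α > 0, ∃ δ > 0, SubtransversalWith A B xb α δ

/-- `sr[A,B](x̄)`: the (possibly infinite) supremum of admissible subtransversality constants. -/
noncomputable def srColl (A B : Set E) (xb : E) : ℝ≥0∞ :=
  ⨆ α ∈ {α : ℝ | 0 < α ∧ ∃ δ > 0, SubtransversalWith A B xb α δ}, ENNReal.ofReal α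

/-- Transversality with constants `α`, `δ`:
`(A − a − x₁) ∩ (B − b − x₂) ∩ (ρ𝔹) ≠ ∅` for all `ρ ∈ (0,δ)`, `a ∈ A ∩ B_δ(x̄)`,
`b ∈ B ∩ B_δ(x̄)` and `max{‖x₁‖,‖x₂‖} < αρ`. -/
def TransversalWith (A B : Set E) (xb : E) (α δ : ℝ) : Prop :=
  ∀ ρ ∈ Set.Ioo (0 : ℝ) δ, ∀ a ∈ A ∩ Metric.ball xb δ, ∀ b ∈ B ∩ Metric.ball xb δ,
    ∀ x₁ x₂ : E, max ‖x₁‖ ‖x₂‖ < α * ρ →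
      (((fun z => z - a - x₁) '' A) ∩ ((fun z => z - b - x₂) '' B) ∩
        Metric.ball 0 ρ).Nonempty

/-- The collection `{A,B}` is transversal at `x̄`. -/
def Transversal (A B : Set E) (xb : E) : Prop :=
  ∃ α > 0, ∃ δ > 0, TransversalWith A B xb α δ

/-- `rg[A,B](x̄)`: the (possibly infinite) supremum of admissible transversality constants. -/
noncomputable def rgColl (A B : Set E) (xb : E) : ℝ≥0∞ :=
  ⨆ α ∈ {α : ℝ | 0 < α ∧ ∃ δ > 0, TransversalWith A B xb α δ}, ENNReal.ofReal α

end Defs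

section Maps

variable {X Y : Type*} [PseudoMetricSpace X] [PseudoMetricSpace Y]

/-- Metric subregularity of the set-valued mapping `F` at `x̄` for `ȳ` with constant `α`
(distances to possibly empty sets are taken in `ℝ≥0∞`, so that `d(x,∅) = ∞`). -/
def MetrSubregWith (F : X → Set Y) (xb : X) (yb : Y) (α : ℝ) : Prop :=
  ∃ δ > 0, ∀ x ∈ Metric.ball xb δ,
    ENNReal.ofReal α * EMetric.infEdist x {x' | yb ∈ F x'} ≤ EMetric.infEdist yb (F x)

/-- `sr[F](x̄|ȳ)`: the supremum of admissible metric subregularity constants. -/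
noncomputable def srMap (F : X → Set Y) (xb : X) (yb : Y) : ℝ≥0∞ :=
  ⨆ α ∈ {α : ℝ | 0 < α ∧ MetrSubregWith F xb yb α}, ENNReal.ofReal α

/-- Metric regularity of the set-valued mapping `F` at `x̄` for `ȳ` with constant `α`. -/
def MetrRegWith (F : X → Set Y) (xb : X) (yb : Y) (α : ℝ) : Prop :=
  ∃ δ > 0, ∀ x ∈ Metric.ball xb δ, ∀ y ∈ Metric.ball yb δ,
    ENNReal.ofReal α * EMetric.infEdist x {x' | y ∈ F x'} ≤ EMetric.infEdist y (F x)

/-- `r[F](x̄|ȳ)`: the supremum of admissible metric regularity constants. -/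
noncomputable def rMap (F : X → Set Y) (xb : X) (yb : Y) : ℝ≥0∞ :=
  ⨆ α ∈ {α : ℝ | 0 < α ∧ MetrRegWith F xb yb α}, ENNReal.ofReal α

/-- `x` is an isolated point of `S`. -/
def IsIsolatedIn (x : X) (S : Set X) : Prop :=
  x ∈ S ∧ ∃ ε > 0, ∀ y ∈ S ∩ Metric.ball x ε, y = x

end Maps

section Helpers

variable {E : Type*} [NormedAddCommGroup E] [InnerProductSpace ℝ E] [FiniteDimensional ℝ E]

lemma le_infDist_aux {s : Set E} {x : E} (hs : s.Nonempty) {d : ℝ}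
    (h : ∀ y ∈ s, d ≤ dist x y) : d ≤ Metric.infDist x s := by
  rw [Metric.infDist_eq_iInf]; haveI := hs.to_subtype; exact le_ciInf (fun y => h y y.2)

lemma mem_projSet_self {A : Set E} {a : E} (ha : a ∈ A) : a ∈ projSet A a :=
  ⟨ha, by simp [Metric.infDist_zero_of_mem ha]⟩

lemma zero_mem_proxNC {A : Set E} {a : E} (ha : a ∈ A) : (0 : E) ∈ proxNC A a :=
  ⟨0, le_refl 0, a, mem_projSet_self ha, by simp⟩

lemma zero_mem_limNC {A : Set E} {a : E} (ha : a ∈ A) : (0 : E) ∈ limNC A a :=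
  ⟨fun _ => a, fun _ => 0, fun _ => ha, fun _ => zero_mem_proxNC ha,
    tendsto_const_nhds, tendsto_const_nhds⟩

/-- Proximal normal inequality: if `a ∈ P_A(x)` then `⟪x-a, p-a⟫ ≤ ‖p-a‖²/2` for `p ∈ A`. -/
lemma proj_inner_le {A : Set E} {x a : E} (h : a ∈ projSet A x) {p : E} (hp : p ∈ A) :
    ⟪x - a, p - a⟫ ≤ ‖p - a‖ ^ 2 / 2 := by
  have h1 : ‖x - a‖ ≤ ‖x - p‖ := by
    rw [h.2, ← dist_eq_norm]; exact Metric.infDist_le_dist_of_mem hp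
  have h2 : ‖x - a‖ ^ 2 ≤ ‖x - p‖ ^ 2 := pow_le_pow_left₀ (norm_nonneg _) h1 2
  have h3 : x - p = (x - a) - (p - a) := by abel
  have h4 : ‖(x - a) - (p - a)‖ ^ 2 = ‖x - a‖ ^ 2 - 2 * ⟪x - a, p - a⟫ + ‖p - a‖ ^ 2 := by
    have := norm_sub_sq_real (x - a) (p - a); linarith
  rw [h3, h4] at h2; linarith

lemma proxNC_inner_le {A : Set E} {a v : E} (hv : v ∈ proxNC A a) :
    ∃ lam : ℝ, 0 ≤ lam ∧ ∀ p ∈ A, ⟪v, p - a⟫ ≤ lam / 2 * ‖p - a‖ ^ 2 := by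
  obtain ⟨lam, hlam, x, hax, rfl⟩ := hv
  refine ⟨lam, hlam, fun p hp => ?_⟩
  rw [real_inner_smul_left]
  have := proj_inner_le hax hp
  nlinarith

/-- Converse: a quadratic upper bound certifies a proximal normal. -/
lemma mem_proxNC_of_quad {A : Set E} {a v : E} (ha : a ∈ A) {C : ℝ} (hC : 0 < C)
    (h : ∀ p ∈ A, ⟪v, p - a⟫ ≤ C * ‖p - a‖ ^ 2) : v ∈ proxNC A a := by
  set x := a + (2 * C)⁻¹ • v with hx
  have hxa : x - a = (2 * C)⁻¹ • v := by rw [hx]; abel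
  have hproj : a ∈ projSet A x := by
    refine ⟨ha, le_antisymm ?_ ?_⟩
    · refine le_infDist_aux ⟨a, ha⟩ (fun p hp => ?_)
      rw [dist_eq_norm]
      have hip : ⟪x - a, p - a⟫ ≤ ‖p - a‖ ^ 2 / 2 := by
        rw [hxa, real_inner_smul_left]
        have := h p hp
        have h2C : (0:ℝ) < 2 * C := by linarith
        have h6 := mul_le_mul_of_nonneg_left (h p hp) (le_of_lt (inv_pos.2 h2C))
        have h7 : (2 * C)⁻¹ * (C * ‖p - a‖ ^ 2) = ‖p - a‖ ^ 2 / 2 := by field_simp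
        linarith
      have hexp : ‖x - p‖ ^ 2 = ‖x - a‖ ^ 2 - 2 * ⟪x - a, p - a⟫ + ‖p - a‖ ^ 2 := by
        have h3 : x - p = (x - a) - (p - a) := by abel
        rw [h3]
        have := norm_sub_sq_real (x - a) (p - a); linarith
      have h5 : ‖x - a‖ ^ 2 ≤ ‖x - p‖ ^ 2 := by rw [hexp]; linarith
      nlinarith [norm_nonneg (x - a), norm_nonneg (x - p)]
    · rw [← dist_eq_norm]; exact Metric.infDist_le_dist_of_mem ha
  exact ⟨2 * C, by linarith, x, hproj, by rw [hxa, smul_smul, mul_inv_cancel₀ (by linarith), one_smul]⟩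

/-- Quadratic upper expansion of the norm around a nonzero point. -/
lemma norm_le_quad {a : E} (ha : a ≠ 0) (b : E) :
    ‖b‖ ≤ ‖a‖ + ⟪‖a‖⁻¹ • a, b - a⟫ + ‖b - a‖ ^ 2 / (2 * ‖a‖) := by
  have h0 : (0:ℝ) < ‖a‖ := norm_pos_iff.2 ha
  have key : ‖a‖ * ‖b‖ - ⟪a, b⟫ ≤ ‖b - a‖ ^ 2 / 2 := by
    have h1 := norm_sub_sq_real b a
    have h2 := real_inner_le_norm a b
    have h3 := real_inner_comm a b
    nlinarith [sq_nonneg (‖a‖ - ‖b‖)]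
  rw [real_inner_smul_left, inner_sub_right, real_inner_self_eq_norm_sq]
  have expand : (‖a‖ + ‖a‖⁻¹ * (⟪a, b⟫ - ‖a‖ ^ 2) + ‖b - a‖ ^ 2 / (2 * ‖a‖)) * ‖a‖
      = ‖a‖ ^ 2 + (⟪a, b⟫ - ‖a‖ ^ 2) + ‖b - a‖ ^ 2 / 2 := by
    field_simp
  refine le_of_mul_le_mul_right ?_ h0
  rw [expand]; nlinarith

end Helpers

section Forward

variable {E : Type*} [NormedAddCommGroup E] [InnerProductSpace ℝ E] [FiniteDimensional ℝ E]

lemma exists_dir (s : ℝ) (hs : 0 ≤ s) (w : E) : ∃ u : E, ‖u‖ ≤ s ∧ ⟪w, u⟫ = s * ‖w‖ := by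
  rcases eq_or_ne w 0 with h | h
  · exact ⟨0, by simpa using hs, by simp [h]⟩
  · have hw : ‖w‖ ≠ 0 := norm_ne_zero_iff.2 h
    refine ⟨(s / ‖w‖) • w, ?_, ?_⟩
    · rw [norm_smul, Real.norm_eq_abs, abs_of_nonneg (by positivity)]
      rw [div_mul_cancel₀ _ hw]
    · rw [real_inner_smul_right, real_inner_self_eq_norm_sq]
      field_simp

lemma le_zero_of_forall_le_mul {L C δ : ℝ} (hδ : 0 < δ) (hC : 0 ≤ C)
    (h : ∀ ρ, 0 < ρ → ρ < δ → L ≤ C * ρ) : L ≤ 0 := by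
  by_contra hL
  push_neg at hL
  have hρ1 : 0 < min (δ/2) (L/(2*C+2)) := lt_min (by linarith) (by positivity)
  have hρ2 : min (δ/2) (L/(2*C+2)) < δ := lt_of_le_of_lt (min_le_left _ _) (by linarith)
  have h3 := h _ hρ1 hρ2
  have h4 : C * min (δ/2) (L/(2*C+2)) ≤ C * (L/(2*C+2)) :=
    mul_le_mul_of_nonneg_left (min_le_right _ _) hC
  have h5 : C * (L/(2*C+2)) < L := by
    have h6 : C / (2*C+2) < 1 := by rw [div_lt_one (by linarith)]; linarith
    calc C * (L/(2*C+2)) = (C/(2*C+2)) * L := by ring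
      _ < 1 * L := mul_lt_mul_of_pos_right h6 hL
      _ = L := one_mul L
  linarith

lemma transversal_forward {A B : Set E} {xb : E} (hT : Transversal A B xb) :
    limNC A xb ∩ (-(limNC B xb)) ⊆ {0} := by
  rintro v ⟨hvA, hvB⟩
  rw [Set.mem_neg] at hvB
  obtain ⟨x, vA, hxA, hvAp, hx, hvAt⟩ := hvA
  obtain ⟨y, vB, hyB, hvBp, hy, hvBt⟩ := hvB
  obtain ⟨α, hα, δ, hδ, hTW⟩ := hT
  -- the key pointwise inequality
  have key : ∀ k, dist (x k) xb < δ → dist (y k) xb < δ →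
      α/2 * (‖vA k‖ + ‖vB k‖) - ‖vA k + vB k‖ ≤ 0 := by
    intro k hxk hyk
    obtain ⟨lam, hlam, hlamq⟩ := proxNC_inner_le (hvAp k)
    obtain ⟨mu, hmu, hmuq⟩ := proxNC_inner_le (hvBp k)
    refine le_zero_of_forall_le_mul hδ
      (C := (lam + mu)/2 * (1 + α/2)^2) (by positivity) (fun ρ hρ0 hρδ => ?_)
    have hs : 0 ≤ α * ρ / 2 := by positivity
    obtain ⟨u₁, hu₁n, hu₁i⟩ := exists_dir (α*ρ/2) hs (vA k)
    obtain ⟨u₂, hu₂n, hu₂i⟩ := exists_dir (α*ρ/2) hs (vB k)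
    have hmax : max ‖u₁‖ ‖u₂‖ < α * ρ := by
      have : α * ρ / 2 < α * ρ := by nlinarith
      exact max_lt (lt_of_le_of_lt hu₁n this) (lt_of_le_of_lt hu₂n this)
    obtain ⟨z, ⟨⟨pA, hpA, hpAe⟩, pB, hpB, hpBe⟩, hzb⟩ :=
      hTW ρ ⟨hρ0, hρδ⟩ (x k) ⟨hxA k, Metric.mem_ball.2 hxk⟩ (y k) ⟨hyB k, Metric.mem_ball.2 hyk⟩
        u₁ u₂ hmax
    have hz : ‖z‖ < ρ := by simpa [Metric.mem_ball, dist_eq_norm] using hzb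
    have hpAx : pA - x k = z + u₁ := by rw [← hpAe]; beta_reduce; abel
    have hpBy : pB - y k = z + u₂ := by rw [← hpBe]; beta_reduce; abel
    have h1 : ⟪vA k, z⟫ + α*ρ/2 * ‖vA k‖ ≤ lam/2 * (ρ + α*ρ/2)^2 := by
      have ha := hlamq pA hpA
      rw [hpAx, inner_add_right, hu₁i] at ha
      have h2 : ‖z + u₁‖ ≤ ρ + α*ρ/2 :=
        le_trans (norm_add_le _ _) (add_le_add (le_of_lt hz) hu₁n)
      have h3 : lam/2 * ‖z + u₁‖^2 ≤ lam/2 * (ρ + α*ρ/2)^2 :=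
        mul_le_mul_of_nonneg_left (pow_le_pow_left₀ (norm_nonneg _) h2 2) (by positivity)
      linarith
    have h1' : ⟪vB k, z⟫ + α*ρ/2 * ‖vB k‖ ≤ mu/2 * (ρ + α*ρ/2)^2 := by
      have ha := hmuq pB hpB
      rw [hpBy, inner_add_right, hu₂i] at ha
      have h2 : ‖z + u₂‖ ≤ ρ + α*ρ/2 :=
        le_trans (norm_add_le _ _) (add_le_add (le_of_lt hz) hu₂n)
      have h3 : mu/2 * ‖z + u₂‖^2 ≤ mu/2 * (ρ + α*ρ/2)^2 :=
        mul_le_mul_of_nonneg_left (pow_le_pow_left₀ (norm_nonneg _) h2 2) (by positivity)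
      linarith
    have h5 : -(‖vA k + vB k‖ * ρ) ≤ ⟪vA k, z⟫ + ⟪vB k, z⟫ := by
      have h6 : |⟪vA k + vB k, z⟫| ≤ ‖vA k + vB k‖ * ‖z‖ := abs_real_inner_le_norm _ _
      have h7 : ‖vA k + vB k‖ * ‖z‖ ≤ ‖vA k + vB k‖ * ρ :=
        mul_le_mul_of_nonneg_left (le_of_lt hz) (norm_nonneg _)
      have h8 : ⟪vA k + vB k, z⟫ = ⟪vA k, z⟫ + ⟪vB k, z⟫ := inner_add_left _ _ _
      rw [h8] at h6
      obtain ⟨h9, _⟩ := abs_le.1 h6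
      linarith
    nlinarith [hρ0, mul_pos hρ0 hρ0]
  -- eventually the inequality holds
  have hev : ∀ᶠ k in atTop, α/2 * (‖vA k‖ + ‖vB k‖) - ‖vA k + vB k‖ ≤ 0 := by
    obtain ⟨N₁, hN₁⟩ := Metric.tendsto_atTop.mp hx δ hδ
    obtain ⟨N₂, hN₂⟩ := Metric.tendsto_atTop.mp hy δ hδ
    refine Filter.eventually_atTop.2 ⟨max N₁ N₂, fun k hk => ?_⟩
    exact key k (hN₁ k (le_trans (le_max_left _ _) hk)) (hN₂ k (le_trans (le_max_right _ _) hk))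
  have hlim : Tendsto (fun k => α/2 * (‖vA k‖ + ‖vB k‖) - ‖vA k + vB k‖) atTop
      (nhds (α/2 * (‖v‖ + ‖-v‖) - ‖v + -v‖)) :=
    (tendsto_const_nhds.mul (hvAt.norm.add hvBt.norm)).sub (hvAt.add hvBt).norm
  have hle := le_of_tendsto hlim hev
  rw [norm_neg, add_neg_cancel, norm_zero] at hle
  have : ‖v‖ ≤ 0 := by nlinarith
  simpa [Set.mem_singleton_iff] using norm_eq_zero.1 (le_antisymm this (norm_nonneg v)) 

end Forward

section Backward

variable {E : Type*} [NormedAddCommGroup E] [InnerProductSpace ℝ E] [FiniteDimensional ℝ E]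

lemma sq_le_imp {x y : ℝ} (hx : 0 ≤ x) (hy : 0 ≤ y) (h : x^2 ≤ y^2) : x ≤ y :=
  (pow_le_pow_iff_left₀ hx hy (two_ne_zero)).mp h

/-- From a quadratic bound valid on a neighborhood plus distance control, a proximal normal. -/
lemma quad_min_prox {A : Set E} {p xb : E} (hpA : p ∈ A) (hp : dist p xb ≤ 1/2)
    {g : E} {C₀ : ℝ} (hC₀ : 0 < C₀)
    (hquad : ∀ p' ∈ A, dist p' xb ≤ 1 → ⟪g, p' - p⟫ ≤ C₀ * ‖p' - p‖^2) :
    g ∈ proxNC A p := by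
  set C := max C₀ (2*‖g‖) + 1 with hCdef
  have hC01 : C₀ ≤ C := le_trans (le_max_left _ _) (by linarith)
  have hCg : 2*‖g‖ ≤ C := le_trans (le_max_right _ _) (by linarith)
  have hC : 0 < C := lt_of_lt_of_le hC₀ hC01
  apply mem_proxNC_of_quad hpA hC
  intro p' hp'
  by_cases hb : dist p' xb ≤ 1
  · exact le_trans (hquad p' hp' hb) (mul_le_mul_of_nonneg_right hC01 (sq_nonneg _))
  · push_neg at hb
    have h12 : (1:ℝ)/2 ≤ ‖p' - p‖ := by
      have h3 := dist_triangle p' p xb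
      have h4 : dist p' p = ‖p' - p‖ := dist_eq_norm _ _
      linarith
    have h5 := real_inner_le_norm g (p' - p)
    have hg := norm_nonneg g
    have hw := norm_nonneg (p' - p)
    have key : ‖g‖*‖p' - p‖ ≤ 2*‖g‖*‖p' - p‖^2 := by nlinarith [mul_nonneg hg hw]
    have key2 : 2*‖g‖*‖p' - p‖^2 ≤ C*‖p' - p‖^2 := mul_le_mul_of_nonneg_right hCg (sq_nonneg _)
    linarith

set_option maxHeartbeats 1000000 in
lemma not_transversal_normals {A B : Set E} (hA : IsClosed A) (hB : IsClosed B) {xb : E}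
    (hxb : xb ∈ A ∩ B) (h : ¬ Transversal A B xb) :
    ∃ v : E, ‖v‖ = 1 ∧ v ∈ limNC A xb ∧ -v ∈ limNC B xb := by
  have h' : ∀ α > (0:ℝ), ∀ δ > (0:ℝ), ¬ TransversalWith A B xb α δ := by
    intro α hα δ hδ hTW
    exact h ⟨α, hα, δ, hδ, hTW⟩
  have main : ∀ k : ℕ, ∃ p q vk dA dB : E, p ∈ A ∧ q ∈ B ∧ ‖vk‖ = 1 ∧
      dist p xb ≤ 2 * ((k:ℝ)+5)⁻¹ ∧ dist q xb ≤ 2 * ((k:ℝ)+5)⁻¹ ∧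
      dA ∈ proxNC A p ∧ ‖dA + vk‖ ≤ Real.sqrt (8 * ((k:ℝ)+5)⁻¹) ∧
      dB ∈ proxNC B q ∧ ‖dB - vk‖ ≤ Real.sqrt (8 * ((k:ℝ)+5)⁻¹) := by
    intro k
    set ε : ℝ := ((k:ℝ)+5)⁻¹ with hεdef
    have hε0 : 0 < ε := by positivity
    have hε5 : ε ≤ 1/5 := by
      have h5 : (5:ℝ) ≤ (k:ℝ)+5 := by
        have : (0:ℝ) ≤ (k:ℝ) := Nat.cast_nonneg k
        linarith
      rw [hεdef, show (1:ℝ)/5 = (5:ℝ)⁻¹ by norm_num]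
      exact inv_anti₀ (by norm_num) h5
    have hk := h' ε hε0 ε hε0
    unfold TransversalWith at hk
    push_neg at hk
    obtain ⟨ρ, ⟨hρ0, hρε⟩, a, ⟨haA, haball⟩, b, ⟨hbB, hbball⟩, x₁, x₂, hmax, hempty'⟩ := hk
    have hempty := Set.eq_empty_iff_forall_notMem.mp hempty'
    rw [Metric.mem_ball] at haball hbball
    set c : E := a + x₁ - (b + x₂) with hcdef
    set K : Set (E × E) := (A ∩ Metric.closedBall xb 1) ×ˢ (B ∩ Metric.closedBall xb 1) with hKdef
    have hK : IsCompact K :=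
      (((isCompact_closedBall xb 1).inter_left hA).prod
        ((isCompact_closedBall xb 1).inter_left hB))
    have hKab : (a, b) ∈ K := by
      constructor
      · exact ⟨haA, Metric.mem_closedBall.2 (by linarith)⟩
      · exact ⟨hbB, Metric.mem_closedBall.2 (by linarith)⟩
    obtain ⟨⟨p, q⟩, hpqK, hmin'⟩ := hK.exists_isMinOn ⟨(a,b), hKab⟩
      ((by fun_prop : Continuous (fun z : E × E =>
        ‖z.1 - z.2 - c‖ + ρ⁻¹ * (‖z.1 - a‖^2 + ‖z.2 - b‖^2))).continuousOn)
    have hmin : ∀ w₁ w₂ : E, (w₁, w₂) ∈ K →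
        ‖p - q - c‖ + ρ⁻¹ * (‖p - a‖^2 + ‖q - b‖^2) ≤
          ‖w₁ - w₂ - c‖ + ρ⁻¹ * (‖w₁ - a‖^2 + ‖w₂ - b‖^2) :=
      fun w₁ w₂ hw => isMinOn_iff.mp hmin' (w₁, w₂) hw
    obtain ⟨⟨hpA', hpcb⟩, hqB', hqcb⟩ := hpqK
    replace hpA' : p ∈ A := hpA'
    replace hpcb : p ∈ Metric.closedBall xb 1 := hpcb
    replace hqB' : q ∈ B := hqB'
    replace hqcb : q ∈ Metric.closedBall xb 1 := hqcb
    have hx₁ : ‖x₁‖ < ε * ρ := lt_of_le_of_lt (le_max_left _ _) hmax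
    have hx₂ : ‖x₂‖ < ε * ρ := lt_of_le_of_lt (le_max_right _ _) hmax
    have hval : ‖p - q - c‖ + ρ⁻¹ * (‖p - a‖^2 + ‖q - b‖^2) ≤ 2 * (ε * ρ) := by
      have h1 := hmin a b hKab
      have h2 : a - b - c = x₂ - x₁ := by rw [hcdef]; abel
      rw [h2] at h1
      have h3 : ‖x₂ - x₁‖ ≤ ‖x₂‖ + ‖x₁‖ := norm_sub_le _ _
      have h4 : ‖a - a‖ = 0 := by simp
      have h5 : ‖b - b‖ = 0 := by simp
      rw [h4, h5] at h1
      have : ρ⁻¹ * (0^2 + 0^2) = 0 := by ring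
      rw [this] at h1
      linarith
    have hsum2 : ‖p - a‖^2 + ‖q - b‖^2 ≤ 2*ε*ρ^2 := by
      have h1 : ρ⁻¹ * (‖p - a‖^2 + ‖q - b‖^2) ≤ 2 * (ε * ρ) := by
        have := norm_nonneg (p - q - c); linarith
      have h3 := mul_le_mul_of_nonneg_left h1 (le_of_lt hρ0)
      have h4 : ρ * (ρ⁻¹ * (‖p - a‖^2 + ‖q - b‖^2)) = ‖p - a‖^2 + ‖q - b‖^2 := by
        field_simp
      rw [h4] at h3
      nlinarith
    have hpa2 : ‖p - a‖^2 ≤ 2*ε*ρ^2 := by nlinarith [sq_nonneg ‖q - b‖]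
    have hqb2 : ‖q - b‖^2 ≤ 2*ε*ρ^2 := by nlinarith [sq_nonneg ‖p - a‖]
    have hpa : ‖p - a‖ ≤ 4/5 * ρ := by
      apply sq_le_imp (norm_nonneg _) (by positivity)
      nlinarith
    have hqb : ‖q - b‖ ≤ 4/5 * ρ := by
      apply sq_le_imp (norm_nonneg _) (by positivity)
      nlinarith
    -- ν > 0
    have hν0 : p - q - c ≠ 0 := by
      intro h0
      apply hempty (p - a - x₁)
      refine ⟨⟨⟨p, hpA', rfl⟩, ⟨q, hqB', ?_⟩⟩, ?_⟩
      · show q - b - x₂ = p - a - x₁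
        have h01 : p - q = c := by
          have h02 := sub_eq_zero.mp h0
          rw [← h02]
        have hq : q = p - c := by rw [← h01]; abel
        rw [hq, hcdef]; abel
      · rw [mem_ball_zero_iff]
        have h1 : ‖p - a - x₁‖ ≤ ‖p - a‖ + ‖x₁‖ := norm_sub_le _ _
        have h2 : ε * ρ ≤ 1/5 * ρ := by nlinarith
        linarith
    have hν : 0 < ‖p - q - c‖ := norm_pos_iff.2 hν0
    set ν : ℝ := ‖p - q - c‖ with hνdef
    set vk : E := ν⁻¹ • (p - q - c) with hvkdef
    have hvk1 : ‖vk‖ = 1 := by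
      rw [hvkdef, norm_smul, Real.norm_eq_abs, abs_of_pos (inv_pos.2 hν)]
      field_simp; rfl
    have hdistp : dist p xb ≤ 2 * ε := by
      have h1 : dist p a ≤ 4/5*ρ := by rw [dist_eq_norm]; exact hpa
      have h2 : dist p xb ≤ dist p a + dist a xb := dist_triangle p a xb
      linarith
    have hdistq : dist q xb ≤ 2 * ε := by
      have h1 : dist q b ≤ 4/5*ρ := by rw [dist_eq_norm]; exact hqb
      have h2 : dist q xb ≤ dist q b + dist b xb := dist_triangle q b xb
      linarith
    have hphalf : dist p xb ≤ 1/2 := by linarith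
    have hqhalf : dist q xb ≤ 1/2 := by linarith
    -- proximal normal at p
    set dA : E := -vk - (2*ρ⁻¹) • (p - a) with hdAdef
    have hdAp : dA ∈ proxNC A p := by
      apply quad_min_prox hpA' hphalf (C₀ := 1/(2*ν) + ρ⁻¹) (by positivity)
      intro p' hp'A hp'cb
      have hK' : (p', q) ∈ K := ⟨⟨hp'A, Metric.mem_closedBall.2 hp'cb⟩, hqB', hqcb⟩
      have h1 := hmin p' q hK'
      have h2 : ‖p' - q - c‖ ≤ ν + ⟪vk, p' - p⟫ + ‖p' - p‖^2/(2*ν) := by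
        have h3 := norm_le_quad hν0 (p' - q - c)
        have h4 : (p' - q - c) - (p - q - c) = p' - p := by abel
        rw [h4] at h3
        exact h3
      have h5 : ‖p' - a‖^2 = ‖p - a‖^2 + 2*⟪p - a, p' - p⟫ + ‖p' - p‖^2 := by
        have h6 : p' - a = (p - a) + (p' - p) := by abel
        rw [h6, norm_add_sq_real]
      have h5' : ρ⁻¹*‖p' - a‖^2 = ρ⁻¹*‖p - a‖^2 + 2*ρ⁻¹*⟪p - a, p' - p⟫ + ρ⁻¹*‖p' - p‖^2 := by
        rw [h5]; ring
      have h7 : ⟪dA, p' - p⟫ = -⟪vk, p' - p⟫ - 2*ρ⁻¹*⟪p - a, p' - p⟫ := by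
        rw [hdAdef]
        simp only [inner_sub_left, inner_neg_left, real_inner_smul_left]
      rw [h7]
      have e : (1/(2*ν) + ρ⁻¹) * ‖p' - p‖^2 = ‖p' - p‖^2/(2*ν) + ρ⁻¹*‖p' - p‖^2 := by ring
      rw [e]
      linarith [h1, h2, h5']
    have hdAerr : ‖dA + vk‖ ≤ Real.sqrt (8*ε) := by
      have h1 : dA + vk = -((2*ρ⁻¹) • (p - a)) := by rw [hdAdef]; abel
      rw [h1, norm_neg, norm_smul, Real.norm_eq_abs, abs_of_pos (by positivity)]
      rw [Real.le_sqrt (by positivity)]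
      have h2 : (2*ρ⁻¹*‖p - a‖)^2 = 4*ρ⁻¹^2*‖p - a‖^2 := by ring
      rw [h2]
      have h3 : ρ⁻¹^2 * ρ^2 = 1 := by field_simp
      nlinarith [hpa2, sq_nonneg ρ⁻¹]
      positivity
    -- proximal normal at q
    set dB : E := vk - (2*ρ⁻¹) • (q - b) with hdBdef
    have hdBq : dB ∈ proxNC B q := by
      apply quad_min_prox hqB' hqhalf (C₀ := 1/(2*ν) + ρ⁻¹) (by positivity)
      intro q' hq'B hq'cb
      have hK' : (p, q') ∈ K := ⟨⟨hpA', hpcb⟩, hq'B, Metric.mem_closedBall.2 hq'cb⟩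
      have h1 := hmin p q' hK'
      have h2 : ‖p - q' - c‖ ≤ ν + ⟪vk, -(q' - q)⟫ + ‖q' - q‖^2/(2*ν) := by
        have h3 := norm_le_quad hν0 (p - q' - c)
        have h4 : (p - q' - c) - (p - q - c) = -(q' - q) := by abel
        rw [h4] at h3
        have h5 : ‖-(q' - q)‖ = ‖q' - q‖ := norm_neg _
        rw [h5] at h3
        exact h3
      have h5 : ‖q' - b‖^2 = ‖q - b‖^2 + 2*⟪q - b, q' - q⟫ + ‖q' - q‖^2 := by
        have h6 : q' - b = (q - b) + (q' - q) := by abel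
        rw [h6, norm_add_sq_real]
      have h5' : ρ⁻¹*‖q' - b‖^2 = ρ⁻¹*‖q - b‖^2 + 2*ρ⁻¹*⟪q - b, q' - q⟫ + ρ⁻¹*‖q' - q‖^2 := by
        rw [h5]; ring
      have h7 : ⟪dB, q' - q⟫ = ⟪vk, q' - q⟫ - 2*ρ⁻¹*⟪q - b, q' - q⟫ := by
        rw [hdBdef]
        simp only [inner_sub_left, real_inner_smul_left]
      have h8 : ⟪vk, -(q' - q)⟫ = -⟪vk, q' - q⟫ := by rw [inner_neg_right]
      rw [h7]
      rw [h8] at h2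
      have e : (1/(2*ν) + ρ⁻¹) * ‖q' - q‖^2 = ‖q' - q‖^2/(2*ν) + ρ⁻¹*‖q' - q‖^2 := by ring
      rw [e]
      linarith [h1, h2, h5']
    have hdBerr : ‖dB - vk‖ ≤ Real.sqrt (8*ε) := by
      have h1 : dB - vk = -((2*ρ⁻¹) • (q - b)) := by rw [hdBdef]; abel
      rw [h1, norm_neg, norm_smul, Real.norm_eq_abs, abs_of_pos (by positivity)]
      rw [Real.le_sqrt (by positivity)]
      have h2 : (2*ρ⁻¹*‖q - b‖)^2 = 4*ρ⁻¹^2*‖q - b‖^2 := by ring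
      rw [h2]
      have h3 : ρ⁻¹^2 * ρ^2 = 1 := by field_simp
      nlinarith [hqb2, sq_nonneg ρ⁻¹]
      positivity
    exact ⟨p, q, vk, dA, dB, hpA', hqB', hvk1, hdistp, hdistq, hdAp, hdAerr, hdBq, hdBerr⟩
  -- extract sequences
  choose p q vk dA dB hpA hqB hvk1 hdistp hdistq hdAp hdAerr hdBq hdBerr using main
  obtain ⟨v, hvs, ψ, hψ, hψt⟩ := (isCompact_sphere (0:E) 1).tendsto_subseq
    (fun k => by rw [mem_sphere_iff_norm, sub_zero]; exact hvk1 k)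
  have hv1 : ‖v‖ = 1 := by rwa [mem_sphere_iff_norm, sub_zero] at hvs
  have hεt : Tendsto (fun k : ℕ => ((k:ℝ)+5)⁻¹) atTop (nhds 0) :=
    tendsto_inv_atTop_zero.comp (tendsto_atTop_add_const_right _ 5 tendsto_natCast_atTop_atTop)
  have hεψ : Tendsto (fun j => ((ψ j : ℝ)+5)⁻¹) atTop (nhds 0) :=
    hεt.comp hψ.tendsto_atTop
  have hsqrtψ : Tendsto (fun j => Real.sqrt (8 * ((ψ j : ℝ)+5)⁻¹)) atTop (nhds 0) := by
    have hm : Tendsto (fun j => 8 * ((ψ j : ℝ)+5)⁻¹) atTop (nhds 0) := by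
      simpa using hεψ.const_mul 8
    have h1 := (Real.continuous_sqrt.tendsto 0).comp hm
    rw [Real.sqrt_zero] at h1
    exact h1
  have hpt : Tendsto (fun j => p (ψ j)) atTop (nhds xb) := by
    rw [tendsto_iff_dist_tendsto_zero]
    apply squeeze_zero (fun j => dist_nonneg) (fun j => hdistp (ψ j))
    simpa using hεψ.const_mul 2
  have hqt : Tendsto (fun j => q (ψ j)) atTop (nhds xb) := by
    rw [tendsto_iff_dist_tendsto_zero]
    apply squeeze_zero (fun j => dist_nonneg) (fun j => hdistq (ψ j))
    simpa using hεψ.const_mul 2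
  have hdAt : Tendsto (fun j => dA (ψ j)) atTop (nhds (-v)) := by
    have h1 : Tendsto (fun j => dA (ψ j) + vk (ψ j)) atTop (nhds 0) :=
      squeeze_zero_norm (fun j => hdAerr (ψ j)) hsqrtψ
    have h2 : Tendsto (fun j => (dA (ψ j) + vk (ψ j)) - vk (ψ j)) atTop (nhds (0 - v)) :=
      h1.sub hψt
    simpa using h2
  have hdBt : Tendsto (fun j => dB (ψ j)) atTop (nhds v) := by
    have h1 : Tendsto (fun j => dB (ψ j) - vk (ψ j)) atTop (nhds 0) :=
      squeeze_zero_norm (fun j => hdBerr (ψ j)) hsqrtψ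
    have h2 : Tendsto (fun j => (dB (ψ j) - vk (ψ j)) + vk (ψ j)) atTop (nhds (0 + v)) :=
      h1.add hψt
    simpa using h2
  refine ⟨-v, by rw [norm_neg]; exact hv1, ?_, ?_⟩
  · exact ⟨fun j => p (ψ j), fun j => dA (ψ j), fun j => hpA (ψ j), fun j => hdAp (ψ j), hpt, hdAt⟩
  · rw [neg_neg]
    exact ⟨fun j => q (ψ j), fun j => dB (ψ j), fun j => hqB (ψ j), fun j => hdBq (ψ j), hqt, hdBt⟩

end Backward

section Statements

variable {E : Type*} [NormedAddCommGroup E] [InnerProductSpace ℝ E] [FiniteDimensional ℝ E]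

theorem stmt12 (A B : Set E) (hA : IsClosed A) (hB : IsClosed B) (xb : E) (hxb : xb ∈ A ∩ B) :
    Transversal A B xb ↔ limNC A xb ∩ (-(limNC B xb)) = {0} := by
  constructor
  · intro hT
    apply Set.Subset.antisymm (transversal_forward hT)
    intro z hz
    rw [Set.mem_singleton_iff] at hz
    subst hz
    refine ⟨zero_mem_limNC hxb.1, ?_⟩
    rw [Set.mem_neg, neg_zero]
    exact zero_mem_limNC hxb.2
  · intro hN
    by_contra hT
    obtain ⟨v, hv1, hvA, hvB⟩ := not_transversal_normals hA hB hxb hT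
    have hmem : v ∈ limNC A xb ∩ (-(limNC B xb)) := ⟨hvA, Set.mem_neg.2 hvB⟩
    rw [hN, Set.mem_singleton_iff] at hmem
    rw [hmem, norm_zero] at hv1
    exact one_ne_zero hv1.symm


end Statements
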